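/- Conversely, if the zero set of a non-isotropic cycle v contains two distinct points m, m' ∈ E that are conjugate with respect to a non-isotropic cycle u, then ⟨u, v⟩ = 0. -/

import Mathlib

/-!
Both points lie on the zero set of `v`, i.e. `⟨z m, v⟩ = ⟨z m', v⟩ = 0` for the zero circles
`z m, z m'`. Pairing the conjugacy relation `z m - t • u = λ • z m'` with `v` therefore leaves
`t ⟨u, v⟩ = 0`, and `t ≠ 0` since otherwise `z m = λ • z m'` would force `m = m'`.
-/

section CycleSpace

variable {R E : Type*} [CommRing R] [AddCommGroup E] [Module R E]

def cyclePairing (B : LinearMap.BilinForm R E) : LinearMap.BilinForm R (R × E × R) :=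
  LinearMap.mk₂ R (fun p q => B p.2.1 q.2.1 - 2 * p.1 * q.2.2 - 2 * q.1 * p.2.2)
    (fun _ _ _ => by simp only [Prod.fst_add, Prod.snd_add, map_add, LinearMap.add_apply]; ring)
    (fun _ _ _ => by
      simp only [Prod.smul_fst, Prod.smul_snd, map_smul, LinearMap.smul_apply, smul_eq_mul]; ring)
    (fun _ _ _ => by simp only [Prod.fst_add, Prod.snd_add, map_add]; ring)
    (fun _ _ _ => by simp only [Prod.smul_fst, Prod.smul_snd, map_smul, smul_eq_mul]; ring)

@[simp]
theorem cyclePairing_apply (B : LinearMap.BilinForm R E) (p q : R × E × R) :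
    cyclePairing B p q = B p.2.1 q.2.1 - 2 * p.1 * q.2.2 - 2 * q.1 * p.2.2 :=
  rfl

def zeroCircle (B : LinearMap.BilinForm R E) (m : E) : R × E × R :=
  (1, -((2 : R) • m), B m m)

theorem cyclePairing_zeroCircle_left {B : LinearMap.BilinForm R E} (hB : B.IsSymm) (m : E)
    (v : R × E × R) :
    cyclePairing B (zeroCircle B m) v = -2 * (v.1 * B m m + B v.2.1 m + v.2.2) := by
  simp only [cyclePairing_apply, zeroCircle, map_neg, map_smul, LinearMap.neg_apply,
    LinearMap.smul_apply, smul_eq_mul, hB.eq m v.2.1]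
  ring

theorem eq_of_zeroCircle_eq_smul {B : LinearMap.BilinForm R E} (h2 : IsSMulRegular E (2 : R))
    {m m' : E} {c : R} (h : zeroCircle B m = c • zeroCircle B m') : m = m' := by
  have hc : 1 = c * 1 := congrArg Prod.fst h
  have hcenter : -((2 : R) • m) = c • -((2 : R) • m') := congrArg (fun p => p.2.1) h
  rw [mul_one] at hc
  rw [← hc, one_smul, neg_inj] at hcenter
  exact h2 hcenter

end CycleSpace

theorem stmt_16_general {k : Type*} [Field k] (hchar : (2 : k) ≠ 0)
    {E : Type*} [AddCommGroup E] [Module k E]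
    (B : LinearMap.BilinForm k E) (hB : B.IsSymm)
    (cyc : (k × E × k) → (k × E × k) → k)
    (hcyc : ∀ p q : k × E × k,
      cyc p q = B p.2.1 q.2.1 - 2 * p.1 * q.2.2 - 2 * q.1 * p.2.2)
    (u v : k × E × k)
    (m m' : E) (hmm : m ≠ m')
    (hconj : ∃ lam : k, lam ≠ 0 ∧
      ((1 : k), -((2 : k) • m), B m m) -
          (2 * (cyc ((1 : k), -((2 : k) • m), B m m) u / cyc u u)) • u
        = lam • ((1 : k), -((2 : k) • m'), B m' m'))
    (hm : v.1 * B m m + B v.2.1 m + v.2.2 = 0)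
    (hm' : v.1 * B m' m' + B v.2.1 m' + v.2.2 = 0) :
    cyc u v = 0 := by
  obtain ⟨lam, -, heq⟩ := hconj
  obtain rfl : cyc = fun p q => cyclePairing B p q := funext₂ hcyc
  set t := 2 * (cyclePairing B (zeroCircle B m) u / cyclePairing B u u)
  change zeroCircle B m - t • u = lam • zeroCircle B m' at heq
  have ht : t ≠ 0 := fun h => by
    rw [h, zero_smul, sub_zero] at heq
    exact hmm (eq_of_zeroCircle_eq_smul (.of_ne_zero hchar) heq)
  have hpaired := congrArg (fun p => cyclePairing B p v) heq
  simp only [map_sub, map_smul, LinearMap.sub_apply, LinearMap.smul_apply, smul_eq_mul,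
    cyclePairing_zeroCircle_left hB, hm, hm', mul_zero, zero_sub, neg_eq_zero] at hpaired
  exact (mul_eq_zero.mp hpaired).resolve_left ht

/-- Conversely, if the zero set of a non-isotropic cycle `v` contains two distinct
points `m, m'` that are conjugate with respect to a non-isotropic cycle `u`, then
`⟨u, v⟩ = 0`. -/
theorem stmt_16 {k : Type*} [Field k] (hchar : (2 : k) ≠ 0)
    {E : Type*} [AddCommGroup E] [Module k E]
    (B : LinearMap.BilinForm k E) (hB : B.IsSymm)
    (haniso : ∀ x : E, B x x = 0 → x = 0)
    (cyc : (k × E × k) → (k × E × k) → k)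
    (hcyc : ∀ p q : k × E × k,
      cyc p q = B p.2.1 q.2.1 - 2 * p.1 * q.2.2 - 2 * q.1 * p.2.2)
    (u v : k × E × k) (hu : cyc u u ≠ 0) (hv : cyc v v ≠ 0)
    (m m' : E) (hmm : m ≠ m')
    (hconj : ∃ lam : k, lam ≠ 0 ∧
      ((1 : k), -((2 : k) • m), B m m) -
          (2 * (cyc ((1 : k), -((2 : k) • m), B m m) u / cyc u u)) • u
        = lam • ((1 : k), -((2 : k) • m'), B m' m'))
    (hm : v.1 * B m m + B v.2.1 m + v.2.2 = 0)
    (hm' : v.1 * B m' m' + B v.2.1 m' + v.2.2 = 0) :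
    cyc u v = 0 :=
  stmt_16_general hchar B hB cyc hcyc u v m m' hmm hconj hm hm'
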